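/- arXiv:quant-ph/0301025 — 3 statements merged into one kernel-verified Lean document; each statement's English description precedes it below -/
import Mathlib

section
/- The sequence p_k = (k / 2^(2(k−1))) · binom(k−1, ⌈(k−1)/2⌉)² converges to 2/π as k → ∞. -/
open Filter Real Real.Wallis
open scoped Nat

/-- `p_k = (k / 2^(2(k−1))) · binom(k−1, ⌈(k−1)/2⌉)²`
(note `⌈(k−1)/2⌉ = k/2` with natural-number division). -/
noncomputable def pSeq (k : ℕ) : ℝ :=
  ((k : ℝ) / 2 ^ (2 * (k - 1))) * (Nat.choose (k - 1) (k / 2) : ℝ) ^ 2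

lemma pSeq_eq (k : ℕ) (hk : 1 ≤ k) :
    pSeq k = ((k : ℝ) / (2 * (k / 2 : ℕ) + 1)) * (W (k / 2))⁻¹ := by
  rcases Nat.even_or_odd k with ⟨m, hm⟩ | ⟨m, hm⟩
  · -- k = 2m, m ≥ 1; write m = n+1
    obtain ⟨n, rfl⟩ : ∃ n, m = n + 1 := ⟨m - 1, by omega⟩
    subst hm
    have h1 : (n + 1 + (n + 1)) - 1 = 2 * n + 1 := by omega
    have h2 : (n + 1 + (n + 1)) / 2 = n + 1 := by omega
    rw [pSeq, h1, h2, W_eq_factorial_ratio,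
      Nat.cast_choose ℝ (show n + 1 ≤ 2 * n + 1 by omega)]
    have h3 : 2 * n + 1 - (n + 1) = n := by omega
    rw [h3]
    have e1 : ((2 * (n + 1)) ! : ℝ) = (2 * (n + 1)) * (2 * n + 1) ! := by
      have : 2 * (n + 1) = (2 * n + 1) + 1 := by omega
      rw [this, Nat.factorial_succ]; push_cast; ring
    have e2 : ((n + 1) ! : ℝ) = (n + 1) * n ! := by
      rw [Nat.factorial_succ]; push_cast; ring
    have e3 : (2 : ℝ) ^ (4 * (n + 1)) = 4 * (2 : ℝ) ^ (2 * (2 * n + 1)) := by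
      rw [show 4 * (n + 1) = 2 * (2 * n + 1) + 2 by ring, pow_add]; ring
    rw [e1, e2, e3]
    have f1 : ((2 * n + 1) ! : ℝ) ≠ 0 := Nat.cast_ne_zero.2 (Nat.factorial_ne_zero _)
    have f2 : ((n) ! : ℝ) ≠ 0 := Nat.cast_ne_zero.2 (Nat.factorial_ne_zero _)
    have f3 : ((n : ℝ) + 1) ≠ 0 := by positivity
    have f4 : (2 : ℝ) ^ (2 * (2 * n + 1)) ≠ 0 := by positivity
    have f5 : (2 * ((n : ℝ) + 1) + 1) ≠ 0 := by positivity
    push_cast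
    field_simp
    ring
  · -- k = 2m+1
    subst hm
    have h1 : (2 * m + 1) - 1 = 2 * m := by omega
    have h2 : (2 * m + 1) / 2 = m := by omega
    rw [pSeq, h1, h2, W_eq_factorial_ratio,
      Nat.cast_choose ℝ (show m ≤ 2 * m by omega)]
    have h3 : 2 * m - m = m := by omega
    rw [h3]
    have e3 : (2 : ℝ) ^ (4 * m) = (2 : ℝ) ^ (2 * (2 * m)) := by ring_nf
    rw [e3]
    have f1 : ((2 * m) ! : ℝ) ≠ 0 := Nat.cast_ne_zero.2 (Nat.factorial_ne_zero _)
    have f2 : ((m) ! : ℝ) ≠ 0 := Nat.cast_ne_zero.2 (Nat.factorial_ne_zero _)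
    have f4 : (2 : ℝ) ^ (2 * (2 * m)) ≠ 0 := by positivity
    have f5 : (2 * (m : ℝ) + 1) ≠ 0 := by positivity
    push_cast
    field_simp

/-- The sequence `p_k` converges to `2/π` as `k → ∞`. -/
theorem pSeq_tendsto : Filter.Tendsto pSeq Filter.atTop (nhds (2 / Real.pi)) := by
  have hdiv : Tendsto (fun k : ℕ => k / 2) atTop atTop :=
    (map_div_atTop_eq_nat 2 (by norm_num)).le
  have hW : Tendsto (fun k : ℕ => (W (k / 2))⁻¹) atTop (nhds (π / 2)⁻¹) :=
    (tendsto_W_nhds_pi_div_two.comp hdiv).inv₀ (ne_of_gt pi_div_two_pos)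
  have hratio : Tendsto (fun k : ℕ => (k : ℝ) / (2 * (k / 2 : ℕ) + 1)) atTop (nhds 1) := by
    have hlow : Tendsto (fun k : ℕ => (k : ℝ) / (k + 1)) atTop (nhds 1) :=
      tendsto_natCast_div_add_atTop (1 : ℝ)
    refine tendsto_of_tendsto_of_tendsto_of_le_of_le hlow tendsto_const_nhds
      (fun k => ?_) (fun k => ?_)
    · apply div_le_div_of_nonneg_left (by positivity) (by positivity)
      have : 2 * (k / 2 : ℕ) + 1 ≤ k + 1 := by omega
      exact_mod_cast this
    · rw [div_le_one (by positivity)]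
      have : k ≤ 2 * (k / 2 : ℕ) + 1 := by omega
      have h := (Nat.cast_le (α := ℝ)).mpr this; push_cast at h; linarith
  have hmul := hratio.mul hW
  rw [one_mul] at hmul
  have hlim : (π / 2)⁻¹ = 2 / π := by
    rw [inv_div]
  rw [hlim] at hmul
  refine hmul.congr' ?_
  filter_upwards [eventually_ge_atTop 1] with k hk
  exact (pSeq_eq k hk).symm
end

section
/- For the sequence p_k = (k / 2^(2(k−1))) · binom(k−1, ⌈(k−1)/2⌉)², the odd subsequence is strictly greater than 2/π and decreasing: for every m ≥ 1, p_{2m+1} > 2/π and p_{2m+3} ≤ p_{2m+1}. -/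
lemma pSeq_odd_eq (m : ℕ) :
    pSeq (2 * m + 1) = ((2 * m + 1 : ℝ) / 2 ^ (4 * m)) * (Nat.centralBinom m : ℝ) ^ 2 := by
  have h1 : 2 * m + 1 - 1 = 2 * m := by omega
  have h2 : (2 * m + 1) / 2 = m := by omega
  have h3 : 2 * (2 * m + 1 - 1) = 4 * m := by omega
  simp only [pSeq, h1, h2, h3]
  rw [show (2 * m).choose m = Nat.centralBinom m from rfl]
  push_cast
  ring

lemma pSeq_ratio (m : ℕ) :
    pSeq (2 * (m + 1) + 1)
      = pSeq (2 * m + 1) * ((2 * m + 1) * (2 * m + 3) / (2 * m + 2) ^ 2) := by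
  rw [pSeq_odd_eq, pSeq_odd_eq]
  have hc : ((m : ℝ) + 1) * (Nat.centralBinom (m + 1) : ℝ)
      = 2 * (2 * m + 1) * (Nat.centralBinom m : ℝ) := by
    exact_mod_cast congrArg (Nat.cast : ℕ → ℝ) (Nat.succ_mul_centralBinom_succ m)
  have hm1 : ((m : ℝ) + 1) ≠ 0 := by positivity
  have hcc : (Nat.centralBinom (m + 1) : ℝ)
      = 2 * (2 * m + 1) * (Nat.centralBinom m : ℝ) / ((m : ℝ) + 1) := by
    field_simp
    linarith [hc]
  rw [hcc]
  have h4 : (4 : ℕ) * (m + 1) = 4 * m + 4 := by ring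
  rw [h4, pow_add]
  push_cast
  have h5 : (2 * (m : ℝ) + 2) ≠ 0 := by positivity
  field_simp
  ring

lemma pSeq_eq_inv_W (m : ℕ) : pSeq (2 * m + 1) = (Real.Wallis.W m)⁻¹ := by
  induction m with
  | zero => simp [pSeq, Real.Wallis.W]
  | succ n ih =>
      rw [pSeq_ratio, ih, Real.Wallis.W_succ, mul_inv]
      congr 1
      have h1 : (2 * (n : ℝ) + 1) ≠ 0 := by positivity
      have h2 : (2 * (n : ℝ) + 2) ≠ 0 := by positivity
      have h3 : (2 * (n : ℝ) + 3) ≠ 0 := by positivity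
      rw [mul_inv, inv_div, inv_div]
      field_simp

lemma W_lt_succ (m : ℕ) : Real.Wallis.W m < Real.Wallis.W (m + 1) := by
  rw [Real.Wallis.W_succ]
  have h := Real.Wallis.W_pos m
  have hf : (1 : ℝ) < (2 * m + 2) / (2 * m + 1) * ((2 * m + 2) / (2 * m + 3)) := by
    rw [div_mul_div_comm, lt_div_iff₀ (by positivity)]
    nlinarith [sq_nonneg ((m : ℝ))]
  exact (lt_mul_iff_one_lt_right h).mpr hf

/-- The odd subsequence of `p_k` is strictly greater than `2/π` and decreasing:
for every `m ≥ 1`, `p_{2m+1} > 2/π` and `p_{2m+3} ≤ p_{2m+1}`. -/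
theorem pSeq_odd : ∀ m : ℕ, 1 ≤ m →
    pSeq (2 * m + 1) > 2 / Real.pi ∧ pSeq (2 * m + 3) ≤ pSeq (2 * m + 1) := by
  intro m _
  have hW := Real.Wallis.W_pos m
  have hlt : Real.Wallis.W m < Real.pi / 2 :=
    lt_of_lt_of_le (W_lt_succ m) (Real.Wallis.W_le (m + 1))
  constructor
  · rw [pSeq_eq_inv_W, show (2 : ℝ) / Real.pi = (Real.pi / 2)⁻¹ by rw [inv_div]]
    exact inv_strictAnti₀ hW hlt
  · have h3 : 2 * m + 3 = 2 * (m + 1) + 1 := by ring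
    rw [h3, pSeq_ratio]
    have hp : 0 < pSeq (2 * m + 1) := by
      rw [pSeq_eq_inv_W]; positivity
    have hr : (2 * (m : ℝ) + 1) * (2 * m + 3) / (2 * m + 2) ^ 2 ≤ 1 := by
      rw [div_le_one (by positivity)]
      nlinarith [sq_nonneg ((m : ℝ))]
    exact mul_le_of_le_one_right hp.le hr
end

section
/- For the sequence p_k = (k / 2^(2(k−1))) · binom(k−1, ⌈(k−1)/2⌉)², the even subsequence is at least 1/2 and increasing toward 2/π: for every m ≥ 1, p_{2m} ≥ 1/2, p_{2m} ≤ p_{2m+2}, and p_{2m} < 2/π. -/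
open scoped Nat


open Real.Wallis in
lemma pSeq_key (n : ℕ) :
    pSeq (2*(n+1)) = (2*(n+1) : ℝ) / ((2*(n+1)+1) * W (n+1)) := by
  set m := n + 1 with hm
  have h1 : 2 * m - 1 = 2 * n + 1 := by omega
  have h2 : (2 * m) / 2 = m := by omega
  have hfactnat : (2*m)! = 2 * Nat.choose (2*n+1) m * m ! * m ! := by
    have hle : m ≤ 2*n+1 := by omega
    have := Nat.choose_mul_factorial_mul_factorial hle
    have hsub : 2*n+1 - m = n := by omega
    rw [hsub] at this
    have h3 : (2*m)! = (2*m) * (2*n+1)! := by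
      have : 2*m = (2*n+1) + 1 := by omega
      rw [this, Nat.factorial_succ]
    have h4 : m ! = m * n ! := by
      rw [hm, Nat.factorial_succ]
    rw [h3, ← this, h4]
    ring
  have hfact : ((2*m)! : ℝ) = 2 * (Nat.choose (2*n+1) m : ℝ) * (m ! : ℝ) * (m ! : ℝ) := by
    exact_mod_cast congrArg (Nat.cast : ℕ → ℝ) hfactnat
  have hW := W_eq_factorial_ratio m
  have hWpos := W_pos m
  unfold pSeq
  rw [h1, h2, hW]
  have hf2 : (0:ℝ) < ((2*m)! : ℝ) := by positivity
  have hfm : (0:ℝ) < (m ! : ℝ) := by positivity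
  have hpow : (2:ℝ) ^ (4*m) = 4 * 2 ^ (2*(2*n+1)) := by
    have : 4*m = 2*(2*n+1) + 2 := by omega
    rw [this, pow_add]; ring
  field_simp
  rw [hpow]
  push_cast [hfact]
  rw [hm]; push_cast
  ring


open Real.Wallis in
lemma pSeq_key2 (n : ℕ) :
    pSeq (2*(n+1)+2) = (2*(n+1)+1 : ℝ) / ((2*(n+1)+2) * W (n+1)) := by
  have h2 : 2*(n+1)+2 = 2*((n+1)+1) := by ring
  rw [h2, pSeq_key (n+1), W_succ]
  have hW := W_pos (n+1)
  have e1 : (0:ℝ) < 2*(n:ℝ)+3 := by positivity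
  have e2 : (0:ℝ) < 2*(n:ℝ)+4 := by positivity
  have e3 : (0:ℝ) < 2*(n:ℝ)+5 := by positivity
  push_cast
  rw [div_eq_div_iff (by positivity) (by positivity)]
  field_simp
  ring

open Real.Wallis in
lemma pSeq_mono (n : ℕ) : pSeq (2*(n+1)) ≤ pSeq (2*(n+1)+2) := by
  rw [pSeq_key n, pSeq_key2 n]
  have hW := W_pos (n+1)
  set x : ℝ := (n:ℝ) + 1 with hx'
  have hx : (0:ℝ) < x := by positivity
  push_cast
  rw [div_le_div_iff₀ (by positivity) (by positivity)]
  nlinarith [mul_pos hW hx, hW]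

open Real.Wallis in
lemma pSeq_upper (n : ℕ) : pSeq (2*(n+1)) < 2 / Real.pi := by
  rw [pSeq_key n]
  have hW := W_pos (n+1)
  have hle := le_W (n+1)
  have hpi := Real.pi_pos
  set x : ℝ := (n:ℝ) + 1 with hx'
  have hx : (0:ℝ) < x := by positivity
  push_cast at hle ⊢
  rw [div_mul_eq_mul_div, div_le_iff₀ (by positivity : (0:ℝ) < 2*((n:ℝ)+1)+2)] at hle
  rw [div_lt_div_iff₀ (by positivity) hpi]
  nlinarith [mul_le_mul_of_nonneg_left hle (by positivity : (0:ℝ) ≤ 2*(n:ℝ)+1), hW, hpi]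

/-- The even subsequence of `p_k` is at least `1/2` and increases toward `2/π`:
for every `m ≥ 1`, `p_{2m} ≥ 1/2`, `p_{2m} ≤ p_{2m+2}`, and `p_{2m} < 2/π`. -/
theorem pSeq_even : ∀ m : ℕ, 1 ≤ m →
    pSeq (2 * m) ≥ 1 / 2 ∧ pSeq (2 * m) ≤ pSeq (2 * m + 2) ∧ pSeq (2 * m) < 2 / Real.pi := by
  intro m hm
  obtain ⟨n, rfl⟩ : ∃ n, m = n + 1 := ⟨m - 1, by omega⟩
  refine ⟨?_, pSeq_mono n, pSeq_upper n⟩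
  induction n with
  | zero =>
    have hbase : pSeq 2 = 1/2 := by unfold pSeq; norm_num
    rw [show 2*(0+1) = 2 by norm_num, hbase]
  | succ k ih =>
    have h := ih (by omega)
    calc (1:ℝ)/2 ≤ pSeq (2*(k+1)) := h
    _ ≤ pSeq (2*(k+1)+2) := pSeq_mono k
    _ = pSeq (2*(k+1+1)) := by ring_nf
end
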